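/- Let Θ : A* → A* be an involutive antimorphism and u ∈ A^ℕ an infinite word. Then u has finite Θ-palindromic defect if and only if there exists an integer H such that every prefix p of u of length greater than H has a Θ-palindromic suffix that is unioccurrent in p (i.e., occurs exactly once in p). -/

import Mathlib

/-!
Basic notions from combinatorics on words: involutive antimorphisms,
Θ-palindromes, factors of infinite words, palindromic defect, richness.
-/

/-- `Θ` is an involutive antimorphism of the free monoid `A*` (words as lists). -/
def IsAntimorphism {A : Type*} (Θ : List A → List A) : Prop :=
  (∀ x y : List A, Θ (x ++ y) = Θ y ++ Θ x) ∧ ∀ x : List A, Θ (Θ x) = x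

/-- The factor `u_i u_{i+1} … u_{i+n-1}` of the infinite word `u`. -/
def factorAt {A : Type*} (u : ℕ → A) (i n : ℕ) : List A :=
  (List.range n).map fun k => u (i + k)

/-- `i` is an occurrence of `w` in the infinite word `u`. -/
def OccursAt {A : Type*} (u : ℕ → A) (w : List A) (i : ℕ) : Prop :=
  w = factorAt u i w.length

/-- `w` is a factor of the infinite word `u`. -/
def IsFactorOf {A : Type*} (w : List A) (u : ℕ → A) : Prop :=
  ∃ i, OccursAt u w i

/-- The prefix of length `n` of the infinite word `u`. -/
def prefixWord {A : Type*} (u : ℕ → A) (n : ℕ) : List A :=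
  factorAt u 0 n

/-- `u` is recurrent: every factor has infinitely many occurrences. -/
def Recurrent {A : Type*} (u : ℕ → A) : Prop :=
  ∀ w, IsFactorOf w u → ∀ N, ∃ i, N ≤ i ∧ OccursAt u w i

/-- `u` is uniformly recurrent: every factor occurs with bounded gaps
(equivalently, every factor has finitely many return words). -/
def UniformlyRecurrent {A : Type*} (u : ℕ → A) : Prop :=
  ∀ w, IsFactorOf w u → ∃ R, ∀ N, ∃ i, N ≤ i ∧ i < N + R ∧ OccursAt u w i

/-- `i` is an occurrence of the word `s` in the finite word `r`. -/
def OccursIn {A : Type*} (s r : List A) (i : ℕ) : Prop :=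
  i + s.length ≤ r.length ∧ s = (r.drop i).take s.length

/-- `s` occurs exactly once in `r`. -/
def Unioccurrent {A : Type*} (s r : List A) : Prop :=
  Set.ncard {i | OccursIn s r i} = 1

/-- The set `Pal_Θ(w)` of `Θ`-palindromic factors of the finite word `w`
(the empty word included). -/
def palSet {A : Type*} (Θ : List A → List A) (w : List A) : Set (List A) :=
  {p | p <:+: w ∧ Θ p = p}

/-- `γ_Θ(w)`: the number of pairs `{a, Θ(a)}` where `a` is a letter occurring
in `w` with `a ≠ Θ(a)`. -/
noncomputable def gammaTheta {A : Type*} (Θ : List A → List A) (w : List A) : ℕ :=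
  Set.ncard {P : Set A | ∃ a, a ∈ w ∧ Θ [a] ≠ [a] ∧ P = {b | [b] = [a] ∨ [b] = Θ [a]}}

/-- The `Θ`-palindromic defect `D_Θ(w) = |w| + 1 - γ_Θ(w) - #Pal_Θ(w)` of a finite word. -/
noncomputable def defect {A : Type*} (Θ : List A → List A) (w : List A) : ℤ :=
  (w.length : ℤ) + 1 - gammaTheta Θ w - (palSet Θ w).ncard

/-- The infinite word `u` has finite `Θ`-palindromic defect
(`D_Θ(u) = sup { D_Θ(w) : w factor of u } < ∞`), i.e. `u` is almost `Θ`-rich. -/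
def FiniteDefect {A : Type*} (Θ : List A → List A) (u : ℕ → A) : Prop :=
  ∃ C : ℤ, ∀ w, IsFactorOf w u → defect Θ w ≤ C

/-- The infinite word `u` is `Θ`-rich: every factor `w` satisfies
`#Pal_Θ(w) = |w| + 1 - γ_Θ(w)`, i.e. has zero `Θ`-defect. -/
def RichWord {A : Type*} (Θ : List A → List A) (u : ℕ → A) : Prop :=
  ∀ w, IsFactorOf w u → defect Θ w = 0

/-- The language of `u` is closed under `Θ`. -/
def LangClosedUnder {A : Type*} (Θ : List A → List A) (u : ℕ → A) : Prop :=
  ∀ w, IsFactorOf w u → IsFactorOf (Θ w) u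

/-- `u` is the image of the infinite word `v` under the monoid morphism
`B* → A*` determined by `φ` on letters, i.e. `u = φ(v₀)φ(v₁)φ(v₂)…`. -/
def IsMorphicImage {A B : Type*} (u : ℕ → A) (φ : B → List A) (v : ℕ → B) : Prop :=
  (∀ n, OccursAt u ((prefixWord v n).flatMap φ) 0) ∧
    ∀ N, ∃ n, N ≤ ((prefixWord v n).flatMap φ).length

/-- The occurrences of `w` and `w'` in `u` alternate: listing in increasing order
all occurrences of `w` or `w'`, consecutive indices are alternately occurrences
of `w` and of `w'` (between two occurrences of one of them, the second of which is
not an occurrence of the other, there is an occurrence of the other). -/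
def AlternateIn {A : Type*} (u : ℕ → A) (w w' : List A) : Prop :=
  (∀ i j, i < j → OccursAt u w i → OccursAt u w j → ¬ OccursAt u w' j →
    ∃ k, i < k ∧ k < j ∧ OccursAt u w' k) ∧
  (∀ i j, i < j → OccursAt u w' i → OccursAt u w' j → ¬ OccursAt u w j →
    ∃ k, i < k ∧ k < j ∧ OccursAt u w k)

/-- Factor complexity `C(n)` of the infinite word `u`. -/
noncomputable def complexity {A : Type*} (u : ℕ → A) (n : ℕ) : ℕ :=
  Set.ncard {w : List A | IsFactorOf w u ∧ w.length = n}

/-- `Θ`-palindromic complexity `P_Θ(n)` of the infinite word `u`. -/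
noncomputable def palComplexity {A : Type*} (Θ : List A → List A) (u : ℕ → A) (n : ℕ) : ℕ :=
  Set.ncard {w : List A | IsFactorOf w u ∧ w.length = n ∧ Θ w = w}

/-- `r` is a complete return word of `w` in `u`: a factor of `u` with exactly two
occurrences of `w`, one as a prefix and one as a suffix. -/
def IsCompleteReturnWord {A : Type*} (u : ℕ → A) (w r : List A) : Prop :=
  IsFactorOf r u ∧ w <+: r ∧ w <:+ r ∧ Set.ncard {i | OccursIn w r i} = 2

namespace UPSaux

variable {A : Type*}

def Th (θ : A → A) (w : List A) : List A := (w.map θ).reverse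

lemma th_th {θ : A → A} (hθ : Function.Involutive θ) (w : List A) :
    Th θ (Th θ w) = w := by
  simp [Th, List.map_reverse, List.map_map, hθ.comp_self]

lemma th_singleton (θ : A → A) (a : A) : Th θ [a] = [θ a] := rfl

lemma th_length (θ : A → A) (w : List A) : (Th θ w).length = w.length := by
  simp [Th]

lemma th_nil (θ : A → A) : Th θ [] = [] := rfl

lemma rep {Θ : List A → List A} (hΘ : IsAntimorphism Θ) :
    ∃ θ : A → A, Function.Involutive θ ∧ Θ = Th θ := by
  obtain ⟨hA, hI⟩ := hΘ
  have hnil : Θ [] = [] := by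
    have h := hA [] []
    simp only [List.append_nil] at h
    have := congrArg List.length h
    simp only [List.length_append] at this
    exact List.eq_nil_of_length_eq_zero (by omega)
  have hne : ∀ a : A, Θ [a] ≠ [] := by
    intro a h
    have h2 := hI [a]
    rw [h, hnil] at h2
    exact List.cons_ne_nil a [] h2.symm
  have hlen : ∀ v : List A, v.length ≤ (Θ v).length := by
    intro v
    induction v with
    | nil => simp
    | cons a t ih =>
      have h : Θ (a :: t) = Θ t ++ Θ [a] := by
        have := hA [a] t; simpa using this
      have h1 : 1 ≤ (Θ [a]).length := List.length_pos_iff.mpr (hne a)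
      rw [h]
      simp only [List.length_append, List.length_cons]
      omega
  have hone : ∀ a : A, ∃ c, Θ [a] = [c] := by
    intro a
    have h1 : (Θ [a]).length ≤ 1 := by
      have := hlen (Θ [a]); rw [hI] at this; simpa using this
    have h2 : 1 ≤ (Θ [a]).length := List.length_pos_iff.mpr (hne a)
    exact List.length_eq_one_iff.mp (by omega)
  choose θ hθ using hone
  have hrep : ∀ w, Θ w = Th θ w := by
    intro w
    induction w with
    | nil => simpa [Th] using hnil
    | cons a t ih =>
      have h : Θ (a :: t) = Θ t ++ Θ [a] := by
        have := hA [a] t; simpa using this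
      rw [h, ih, hθ]
      simp [Th]
  have hinv : Function.Involutive θ := by
    intro a
    have h := hI [a]
    rw [hθ, hθ] at h
    exact (List.cons.injEq _ _ _ _).mp h |>.1
  exact ⟨θ, hinv, funext hrep⟩


def Gset (Θ : List A → List A) (w : List A) : Set (Set A) :=
  {P : Set A | ∃ a, a ∈ w ∧ Θ [a] ≠ [a] ∧ P = {b | [b] = [a] ∨ [b] = Θ [a]}}

lemma gammaTheta_eq (Θ : List A → List A) (w : List A) :
    gammaTheta Θ w = (Gset Θ w).ncard := rfl

lemma palSet_finite (Θ : List A → List A) (w : List A) : (palSet Θ w).Finite := by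
  classical
  apply Set.Finite.subset (w.sublists.toFinset : Finset (List A)).finite_toSet
  intro p hp
  simpa using hp.1.sublist

lemma gset_finite [Fintype A] (Θ : List A → List A) (w : List A) : (Gset Θ w).Finite :=
  Set.toFinite _

lemma palSet_mono (Θ : List A → List A) {v w : List A} (h : v <:+: w) :
    palSet Θ v ⊆ palSet Θ w := fun p hp => ⟨hp.1.trans h, hp.2⟩

lemma gset_mono (Θ : List A → List A) {v w : List A} (h : ∀ x, x ∈ v → x ∈ w) :
    Gset Θ v ⊆ Gset Θ w := by
  rintro P ⟨a, ha, hne, rfl⟩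
  exact ⟨a, h a ha, hne, rfl⟩

lemma nil_mem_palSet (θ : A → A) (w : List A) : [] ∈ palSet (Th θ) w :=
  ⟨List.nil_infix, rfl⟩

lemma th_suffix_prefix (θ : A → A) {v w : List A} (h : v <:+ w) :
    Th θ v <+: Th θ w :=
  List.reverse_prefix.mpr (h.map θ)

lemma th_infix (θ : A → A) {v w : List A} (h : v <:+: w) :
    Th θ v <:+: Th θ w :=
  List.reverse_infix.mpr (h.map θ)

/-- two Θ-palindromes, one a suffix of the other: also a prefix -/
lemma pal_suffix_prefix (θ : A → A) {s₁ s₂ : List A}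
    (h1 : Th θ s₁ = s₁) (h2 : Th θ s₂ = s₂) (h : s₁ <:+ s₂) : s₁ <+: s₂ := by
  have := th_suffix_prefix θ h
  rwa [h1, h2] at this

/-- a factor of `w ++ [a]` that is not a factor of `w` is a suffix -/
lemma new_factor_suffix {v w : List A} {a : A}
    (hinf : v <:+: w ++ [a]) (hnot : ¬ v <:+: w) : v <:+ w ++ [a] := by
  obtain ⟨l, r, h⟩ := hinf
  rcases r.eq_nil_or_concat with rfl | ⟨r', c, rfl⟩
  · exact ⟨l, by simpa using h⟩
  · exfalso
    apply hnot
    have h2 : (l ++ v ++ r') ++ [c] = w ++ [a] := by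
      simpa [List.concat_eq_append, List.append_assoc] using h
    have h3 := congrArg List.dropLast h2
    rw [List.dropLast_concat, List.dropLast_concat] at h3
    exact ⟨l, r', by simpa [List.append_assoc] using h3⟩

/-- a nonempty suffix of `w ++ [a]` ends in `a` -/
lemma suffix_concat_last {s w : List A} {a : A}
    (h : s <:+ w ++ [a]) (hne : s ≠ []) : ∃ s', s = s' ++ [a] := by
  rcases s.eq_nil_or_concat with rfl | ⟨s', c, rfl⟩
  · exact absurd rfl hne
  · obtain ⟨l, hl⟩ := h
    rw [List.concat_eq_append, ← List.append_assoc] at hl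
    have := congrArg List.getLast? hl
    rw [List.getLast?_concat, List.getLast?_concat] at this
    obtain rfl : c = a := by simpa using this
    exact ⟨s', by simp⟩

/-- at most one new Θ-palindrome when appending a letter -/
lemma pal_diff_subsingleton (θ : A → A) (w : List A) (a : A) :
    (palSet (Th θ) (w ++ [a]) \ palSet (Th θ) w).Subsingleton := by
  have key : ∀ s₁ s₂ : List A,
      s₁ ∈ palSet (Th θ) (w ++ [a]) \ palSet (Th θ) w →
      s₂ ∈ palSet (Th θ) (w ++ [a]) \ palSet (Th θ) w →
      s₁ <:+ s₂ → s₁ = s₂ := by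
    intro s₁ s₂ h1 h2 hsuf
    by_contra hne
    have hp1 : Th θ s₁ = s₁ := h1.1.2
    have hp2 : Th θ s₂ = s₂ := h2.1.2
    have hnotw : ¬ s₁ <:+: w := fun hi => h1.2 ⟨hi, hp1⟩
    have hs2 : s₂ <:+ w ++ [a] :=
      new_factor_suffix h2.1.1 (fun hi => h2.2 ⟨hi, hp2⟩)
    have hpre : s₁ <+: s₂ := pal_suffix_prefix θ hp1 hp2 hsuf
    obtain ⟨t, rfl⟩ := hpre
    have htne : t ≠ [] := by rintro rfl; simp at hne
    obtain ⟨t', c, rfl⟩ := t.eq_nil_or_concat.resolve_left htne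
    obtain ⟨l, hl⟩ := hs2
    apply hnotw
    simp only [List.concat_eq_append, ← List.append_assoc] at hl
    have h3 := congrArg List.dropLast hl
    rw [List.dropLast_concat, List.dropLast_concat] at h3
    exact ⟨l, t', by simpa [List.append_assoc] using h3⟩
  intro s₁ h1 s₂ h2
  have hs1 : s₁ <:+ w ++ [a] := new_factor_suffix h1.1.1 (fun hi => h1.2 ⟨hi, h1.1.2⟩)
  have hs2 : s₂ <:+ w ++ [a] := new_factor_suffix h2.1.1 (fun hi => h2.2 ⟨hi, h2.1.2⟩)
  rcases List.suffix_or_suffix_of_suffix hs1 hs2 with h | h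
  · exact key _ _ h1 h2 h
  · exact (key _ _ h2 h1 h).symm

lemma pal_ncard_concat_le (θ : A → A) (w : List A) (a : A) :
    (palSet (Th θ) (w ++ [a])).ncard ≤ (palSet (Th θ) w).ncard + 1 := by
  rcases (palSet (Th θ) (w ++ [a]) \ palSet (Th θ) w).eq_empty_or_nonempty with he | ⟨s, hs⟩
  · have hsub : palSet (Th θ) (w ++ [a]) ⊆ palSet (Th θ) w := by
      intro x hx
      by_contra hxn
      exact absurd he (by rw [Set.eq_empty_iff_forall_notMem]; push_neg; exact ⟨x, hx, hxn⟩)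
    calc (palSet (Th θ) (w ++ [a])).ncard ≤ (palSet (Th θ) w).ncard :=
          Set.ncard_le_ncard hsub (palSet_finite _ _)
      _ ≤ _ := Nat.le_succ _
  · have hsub : palSet (Th θ) (w ++ [a]) ⊆ insert s (palSet (Th θ) w) := by
      intro x hx
      by_cases hxw : x ∈ palSet (Th θ) w
      · exact Set.mem_insert_of_mem _ hxw
      · exact Set.mem_insert_iff.mpr (Or.inl (pal_diff_subsingleton θ w a ⟨hx, hxw⟩ hs))
    calc (palSet (Th θ) (w ++ [a])).ncard ≤ (insert s (palSet (Th θ) w)).ncard :=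
          Set.ncard_le_ncard hsub ((palSet_finite _ _).insert s)
      _ ≤ _ := Set.ncard_insert_le _ _

lemma gset_concat_subset (Θ : List A → List A) (w : List A) (a : A) :
    Gset Θ (w ++ [a]) ⊆ insert {b | [b] = [a] ∨ [b] = Θ [a]} (Gset Θ w) := by
  rintro P ⟨c, hc, hne, rfl⟩
  rcases List.mem_append.mp hc with h | h
  · exact Set.mem_insert_of_mem _ ⟨c, h, hne, rfl⟩
  · obtain rfl : c = a := by simpa using h
    exact Set.mem_insert _ _

lemma gset_ncard_concat_le [Fintype A] (Θ : List A → List A) (w : List A) (a : A) :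
    (Gset Θ (w ++ [a])).ncard ≤ (Gset Θ w).ncard + 1 :=
  le_trans (Set.ncard_le_ncard (gset_concat_subset Θ w a) (Set.toFinite _))
    (Set.ncard_insert_le _ _)

variable {θ : A → A}

lemma pal_singleton_iff (θ : A → A) (a : A) : Th θ [a] = [a] ↔ θ a = a := by
  simp [Th]

/-- the γ-increment and the pal-increment cannot both be positive -/
lemma exclusion (hθ : Function.Involutive θ) (w : List A) (a : A)
    (hG : ∃ P, P ∈ Gset (Th θ) (w ++ [a]) ∧ P ∉ Gset (Th θ) w)
    (hP : ∃ s, s ∈ palSet (Th θ) (w ++ [a]) ∧ s ∉ palSet (Th θ) w) : False := by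
  obtain ⟨P, ⟨c, hc, hne, rfl⟩, hPn⟩ := hG
  have hca : c = a := by
    rcases List.mem_append.mp hc with h | h
    · exact absurd ⟨c, h, hne, rfl⟩ hPn
    · simpa using h
  rw [hca] at hne hPn
  have hta : θ a ≠ a := by
    rw [th_singleton] at hne
    simpa using hne
  have haw : a ∉ w := fun h => hPn ⟨a, h, hne, rfl⟩
  have htaw : θ a ∉ w := by
    intro h
    apply hPn
    refine ⟨θ a, h, ?_, ?_⟩
    · rw [th_singleton, hθ a]
      simp [Ne, List.cons.injEq]
      intro hh; exact hta hh.symm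
    · ext b
      simp only [Set.mem_setOf_eq, th_singleton, hθ a, List.cons.injEq, and_true]
      tauto
  obtain ⟨s, hs, hsn⟩ := hP
  have hpal : Th θ s = s := hs.2
  have hsuf : s <:+ w ++ [a] := new_factor_suffix hs.1 (fun hi => hsn ⟨hi, hpal⟩)
  have hsne : s ≠ [] := fun h => hsn (h ▸ nil_mem_palSet θ w)
  obtain ⟨s', rfl⟩ := suffix_concat_last hsuf hsne
  have hamem : a ∈ s' ++ [a] := by simp
  have hth : θ a ∈ s' ++ [a] := by
    have h1 : θ a ∈ (s' ++ [a]).map θ := List.mem_map_of_mem (f := θ) hamem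
    have h2 : (s' ++ [a]).map θ = (s' ++ [a]).reverse := by
      have := congrArg List.reverse hpal
      rw [Th, List.reverse_reverse] at this
      exact this
    rw [h2, List.mem_reverse] at h1
    exact h1
  have := hsuf.subset hth
  rcases List.mem_append.mp this with h | h
  · exact htaw h
  · exact hta (by simpa using h)

lemma defect_concat_le [Fintype A] (hθ : Function.Involutive θ) (w : List A) (a : A) :
    defect (Th θ) w ≤ defect (Th θ) (w ++ [a]) := by
  have hmonoP : (palSet (Th θ) w).ncard ≤ (palSet (Th θ) (w ++ [a])).ncard :=
    Set.ncard_le_ncard (palSet_mono _ ⟨[], [a], by simp⟩) (palSet_finite _ _)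
  have hmonoG : (Gset (Th θ) w).ncard ≤ (Gset (Th θ) (w ++ [a])).ncard :=
    Set.ncard_le_ncard (gset_mono _ (fun x hx => List.mem_append.mpr (Or.inl hx))) (Set.toFinite _)
  have key : (palSet (Th θ) (w ++ [a])).ncard + (Gset (Th θ) (w ++ [a])).ncard ≤
      (palSet (Th θ) w).ncard + (Gset (Th θ) w).ncard + 1 := by
    by_cases hGd : ∃ P, P ∈ Gset (Th θ) (w ++ [a]) ∧ P ∉ Gset (Th θ) w
    · have hPd : palSet (Th θ) (w ++ [a]) ⊆ palSet (Th θ) w := by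
        intro s hsmem
        by_contra hsn
        exact exclusion hθ w a hGd ⟨s, hsmem, hsn⟩
      have h1 : (palSet (Th θ) (w ++ [a])).ncard ≤ (palSet (Th θ) w).ncard :=
        Set.ncard_le_ncard hPd (palSet_finite _ _)
      have h2 := gset_ncard_concat_le (Th θ) w a
      omega
    · push_neg at hGd
      have h1 : (Gset (Th θ) (w ++ [a])).ncard ≤ (Gset (Th θ) w).ncard :=
        Set.ncard_le_ncard (fun P hp => hGd P hp) (Set.toFinite _)
      have h2 := pal_ncard_concat_le θ w a
      omega
  unfold defect
  rw [gammaTheta_eq, gammaTheta_eq]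
  simp only [List.length_append, List.length_singleton]
  push_cast
  omega

lemma defect_prefix_mono [Fintype A] (hθ : Function.Involutive θ) {v w : List A}
    (h : v <+: w) : defect (Th θ) v ≤ defect (Th θ) w := by
  obtain ⟨t, rfl⟩ := h
  induction t using List.reverseRecOn with
  | nil => simp
  | append_singleton t a ih =>
    calc defect (Th θ) v ≤ defect (Th θ) (v ++ t) := ih
      _ ≤ defect (Th θ) ((v ++ t) ++ [a]) := defect_concat_le hθ (v ++ t) a
      _ = defect (Th θ) (v ++ (t ++ [a])) := by rw [List.append_assoc]

lemma palSet_th_subset (hθ : Function.Involutive θ) (w : List A) :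
    palSet (Th θ) w ⊆ palSet (Th θ) (Th θ w) := by
  rintro p ⟨hinf, hpal⟩
  exact ⟨hpal ▸ th_infix θ hinf, hpal⟩

lemma palSet_th (hθ : Function.Involutive θ) (w : List A) :
    palSet (Th θ) (Th θ w) = palSet (Th θ) w := by
  refine le_antisymm ?_ (palSet_th_subset hθ w)
  have := palSet_th_subset hθ (Th θ w)
  rwa [th_th hθ] at this

lemma mem_th_iff (hθ : Function.Involutive θ) {w : List A} {b : A} :
    b ∈ Th θ w ↔ θ b ∈ w := by
  simp only [Th, List.mem_reverse, List.mem_map]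
  constructor
  · rintro ⟨c, hcw, rfl⟩; rwa [hθ c]
  · intro h; exact ⟨θ b, h, hθ b⟩

lemma gset_th_subset (hθ : Function.Involutive θ) (w : List A) :
    Gset (Th θ) w ⊆ Gset (Th θ) (Th θ w) := by
  rintro P ⟨c, hc, hne, rfl⟩
  refine ⟨θ c, ?_, ?_, ?_⟩
  · rw [mem_th_iff hθ, hθ c]; exact hc
  · rw [th_singleton, hθ c]
    rw [th_singleton] at hne
    simp only [Ne, List.cons.injEq, and_true] at hne ⊢
    intro hh; exact hne hh.symm
  · ext b
    simp only [Set.mem_setOf_eq, th_singleton, hθ c, List.cons.injEq, and_true]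
    tauto

lemma gset_th (hθ : Function.Involutive θ) (w : List A) :
    Gset (Th θ) (Th θ w) = Gset (Th θ) w := by
  refine le_antisymm ?_ (gset_th_subset hθ w)
  have := gset_th_subset hθ (Th θ w)
  rwa [th_th hθ] at this

lemma defect_th (hθ : Function.Involutive θ) (w : List A) :
    defect (Th θ) (Th θ w) = defect (Th θ) w := by
  unfold defect
  rw [gammaTheta_eq, gammaTheta_eq, gset_th hθ, palSet_th hθ, th_length]

lemma defect_suffix_mono [Fintype A] (hθ : Function.Involutive θ) {v w : List A}
    (h : v <:+ w) : defect (Th θ) v ≤ defect (Th θ) w := by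
  have h1 := defect_prefix_mono hθ (th_suffix_prefix θ h)
  rwa [defect_th hθ, defect_th hθ] at h1

lemma defect_infix_mono [Fintype A] (hθ : Function.Involutive θ) {v w : List A}
    (h : v <:+: w) : defect (Th θ) v ≤ defect (Th θ) w := by
  obtain ⟨l, r, rfl⟩ := h
  calc defect (Th θ) v ≤ defect (Th θ) (l ++ v) := defect_suffix_mono hθ ⟨l, rfl⟩
    _ ≤ defect (Th θ) (l ++ v ++ r) := defect_prefix_mono hθ ⟨r, rfl⟩

section Occ

variable (u : ℕ → A)

lemma length_factorAt (i n : ℕ) : (factorAt u i n).length = n := by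
  simp [factorAt]

lemma factorAt_append (i n m : ℕ) :
    factorAt u i (n + m) = factorAt u i n ++ factorAt u (i + n) m := by
  simp [factorAt, List.range_add, List.map_map, Function.comp_def, add_assoc]

lemma prefixWord_length (n : ℕ) : (prefixWord u n).length = n :=
  length_factorAt u 0 n

lemma prefixWord_succ (n : ℕ) :
    prefixWord u (n + 1) = prefixWord u n ++ [u n] := by
  rw [prefixWord, factorAt_append]
  simp [factorAt, prefixWord, List.range_succ]

lemma prefixWord_prefix {n m : ℕ} (h : n ≤ m) :
    prefixWord u n <+: prefixWord u m := by
  refine ⟨factorAt u n (m - n), ?_⟩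
  have h2 := factorAt_append u 0 n (m - n)
  rw [Nat.zero_add] at h2
  rw [prefixWord, prefixWord, ← h2]
  congr 1
  omega

lemma occursAt_suffix {w : List A} {i : ℕ} (h : w = factorAt u i w.length) :
    w <:+ prefixWord u (i + w.length) := by
  refine ⟨factorAt u 0 i, ?_⟩
  rw [prefixWord, factorAt_append]
  simp [← h]

lemma takedrop {i k m : ℕ} (h : i + k ≤ m) :
    ((prefixWord u m).drop i).take k = factorAt u i k := by
  obtain ⟨j, rfl⟩ : ∃ j, m = i + (k + j) := ⟨m - (i + k), by omega⟩
  have e1 := factorAt_append u 0 i (k + j)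
  rw [Nat.zero_add] at e1
  rw [prefixWord, e1, factorAt_append u i k j,
    List.drop_left' (length_factorAt u 0 i), List.take_left' (length_factorAt u i k)]

lemma occursIn_prefixWord {s : List A} {i m : ℕ} :
    OccursIn s (prefixWord u m) i ↔ i + s.length ≤ m ∧ s = factorAt u i s.length := by
  rw [OccursIn, prefixWord_length]
  constructor
  · rintro ⟨h1, h2⟩
    rw [takedrop u h1] at h2
    exact ⟨h1, h2⟩
  · rintro ⟨h1, h2⟩
    rw [takedrop u h1]
    exact ⟨h1, h2⟩

lemma occursIn_of_suffix {s : List A} {m : ℕ} (h : s <:+ prefixWord u m) :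
    OccursIn s (prefixWord u m) (m - s.length) := by
  have hlen : s.length ≤ m := by
    have := h.length_le
    rwa [prefixWord_length] at this
  obtain ⟨t, ht⟩ := h
  have htl : t.length = m - s.length := by
    have := congrArg List.length ht
    rw [List.length_append, prefixWord_length] at this
    omega
  constructor
  · rw [prefixWord_length]; omega
  · rw [← ht, List.drop_left' htl, List.take_length]

lemma occursIn_infix {s r : List A} {i : ℕ} (h : OccursIn s r i) : s <:+: r := by
  obtain ⟨h1, h2⟩ := h
  refine ⟨r.take i, r.drop (i + s.length), ?_⟩
  have h3 : r.drop i = s ++ r.drop (i + s.length) := by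
    conv_lhs => rw [← List.take_append_drop s.length (r.drop i)]
    rw [← h2, List.drop_drop]
  rw [List.append_assoc, ← h3, List.take_append_drop]

lemma infix_occursIn {s r : List A} (h : s <:+: r) : ∃ i, OccursIn s r i := by
  obtain ⟨l, t, ht⟩ := h
  refine ⟨l.length, ?_, ?_⟩
  · have := congrArg List.length ht
    simp only [List.length_append] at this
    omega
  · rw [← ht, List.append_assoc, List.drop_left' rfl, List.take_left' rfl]

lemma uni_of {s : List A} {n : ℕ} (hs : s <:+ prefixWord u n)
    (hnot : ¬ s <:+: prefixWord u (n - 1)) :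
    {i | OccursIn s (prefixWord u n) i} = {n - s.length} := by
  ext i
  simp only [Set.mem_setOf_eq, Set.mem_singleton_iff]
  constructor
  · intro hi
    obtain ⟨h1, h2⟩ := (occursIn_prefixWord u).mp hi
    have : i + s.length = n := by
      by_contra hne
      exact hnot (occursIn_infix ((occursIn_prefixWord u).mpr ⟨by omega, h2⟩))
    omega
  · rintro rfl
    exact occursIn_of_suffix u hs

lemma uni_extract {s : List A} {n : ℕ} (hs : s <:+ prefixWord u n) (hn : 1 ≤ n)
    (hu : Set.ncard {i | OccursIn s (prefixWord u n) i} = 1) :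
    s ≠ [] ∧ ¬ s <:+: prefixWord u (n - 1) := by
  obtain ⟨i0, hset⟩ := Set.ncard_eq_one.mp hu
  have hlen : s.length ≤ n := by
    have := hs.length_le
    rwa [prefixWord_length] at this
  have hmem : ∀ j, OccursIn s (prefixWord u n) j → j = i0 := by
    intro j hj
    have : j ∈ {i | OccursIn s (prefixWord u n) i} := hj
    rwa [hset, Set.mem_singleton_iff] at this
  have hlast : (n - s.length) = i0 := hmem _ (occursIn_of_suffix u hs)
  constructor
  · rintro rfl
    have h0 : (0 : ℕ) = i0 := hmem 0 ⟨by simp, by simp⟩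
    have h1 : n = i0 := hmem n ⟨by simp [prefixWord_length], by simp⟩
    omega
  · intro hinf
    obtain ⟨j, hj⟩ := infix_occursIn hinf
    obtain ⟨hj1, hj2⟩ := (occursIn_prefixWord u).mp hj
    have := hmem j ((occursIn_prefixWord u).mpr ⟨by omega, hj2⟩)
    omega

end Occ


lemma eventually_const {f : ℕ → ℤ} (hm : Monotone f) {C : ℤ} (hb : ∀ n, f n ≤ C) :
    ∃ H, ∀ n, H ≤ n → f n = f H := by
  obtain ⟨m, ⟨H, hH⟩, hmax⟩ := Int.exists_greatest_of_bdd (P := fun z => ∃ n, f n = z)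
    ⟨C, by rintro z ⟨n, rfl⟩; exact hb n⟩ ⟨f 0, 0, rfl⟩
  refine ⟨H, fun n hn => le_antisymm ?_ (hm hn)⟩
  rw [hH]
  exact hmax (f n) ⟨n, rfl⟩

end UPSaux

/-- An infinite word has finite `Θ`-defect iff there is an integer `H` such that
every prefix of length greater than `H` has a unioccurrent `Θ`-palindromic
suffix. -/
theorem finiteDefect_iff_unioccurrent_palindromic_suffix
    {A : Type*} [Fintype A] (Θ : List A → List A) (hΘ : IsAntimorphism Θ)
    (u : ℕ → A) :
    FiniteDefect Θ u ↔ ∃ H : ℕ, ∀ n : ℕ, H < n →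
      ∃ s : List A, s <:+ prefixWord u n ∧ Θ s = s ∧ Unioccurrent s (prefixWord u n) :=  by
  classical
  obtain ⟨θ, hθ, rfl⟩ := UPSaux.rep hΘ
  open UPSaux in
  constructor
  · rintro ⟨C, hC⟩
    have hprefFac : ∀ n, IsFactorOf (prefixWord u n) u := fun n =>
      ⟨0, by rw [OccursAt, UPSaux.prefixWord_length u n]; rfl⟩
    have hDmono : Monotone (fun n => defect (Th θ) (prefixWord u n)) := fun m n h =>
      defect_prefix_mono hθ (prefixWord_prefix u h)
    have hGmono : Monotone (fun n => ((Gset (Th θ) (prefixWord u n)).ncard : ℤ)) := by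
      intro m n h
      have := Set.ncard_le_ncard
        (gset_mono (Th θ) fun x hx => (prefixWord_prefix u h).subset hx) (Set.toFinite _)
      simp only []
      exact_mod_cast this
    obtain ⟨H1, hH1⟩ := eventually_const hDmono (fun n => hC _ (hprefFac n))
    obtain ⟨H2, hH2⟩ := eventually_const hGmono
      (C := ((Set.univ : Set (Set A)).ncard : ℤ))
      (fun n => by exact_mod_cast Set.ncard_le_ncard (Set.subset_univ _) Set.finite_univ)
    refine ⟨max H1 H2, ?_⟩
    intro n hn
    have hn1 : 1 ≤ n := by omega
    have hD : defect (Th θ) (prefixWord u n) = defect (Th θ) (prefixWord u (n - 1)) := by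
      have e1 := hH1 n (by omega)
      have e2 := hH1 (n - 1) (by omega)
      rw [e1, e2]
    have hG : (Gset (Th θ) (prefixWord u n)).ncard
        = (Gset (Th θ) (prefixWord u (n - 1))).ncard := by
      have e1 := hH2 n (by omega)
      have e2 := hH2 (n - 1) (by omega)
      exact_mod_cast e1.trans e2.symm
    have hpal : (palSet (Th θ) (prefixWord u n)).ncard
        = (palSet (Th θ) (prefixWord u (n - 1))).ncard + 1 := by
      unfold defect at hD
      rw [gammaTheta_eq, gammaTheta_eq, hG, prefixWord_length, prefixWord_length] at hD
      omega
    have hdiff : ∃ s, s ∈ palSet (Th θ) (prefixWord u n) ∧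
        s ∉ palSet (Th θ) (prefixWord u (n - 1)) := by
      by_contra hcon
      push_neg at hcon
      have := Set.ncard_le_ncard hcon (palSet_finite _ _)
      omega
    obtain ⟨s, hs, hsn⟩ := hdiff
    have hpals : Th θ s = s := hs.2
    have hnotw : ¬ s <:+: prefixWord u (n - 1) := fun hi => hsn ⟨hi, hpals⟩
    have hsucc : prefixWord u n = prefixWord u (n - 1) ++ [u (n - 1)] := by
      rw [← prefixWord_succ]
      congr 1
      omega
    have hsuf : s <:+ prefixWord u n := by
      rw [hsucc] at hs ⊢
      exact new_factor_suffix hs.1 hnotw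
    refine ⟨s, hsuf, hpals, ?_⟩
    unfold Unioccurrent
    rw [uni_of u hsuf hnotw]
    exact Set.ncard_singleton _
  · rintro ⟨H, hH⟩
    have step : ∀ n, H < n →
        defect (Th θ) (prefixWord u n) = defect (Th θ) (prefixWord u (n - 1)) := by
      intro n hn
      obtain ⟨s, hsuf, hpals, huni⟩ := hH n hn
      obtain ⟨hsne, hnot⟩ := uni_extract u hsuf (by omega) huni
      have hsucc : prefixWord u n = prefixWord u (n - 1) ++ [u (n - 1)] := by
        rw [← prefixWord_succ]
        congr 1
        omega
      have hsnotw : s ∉ palSet (Th θ) (prefixWord u (n - 1)) := fun hmem => hnot hmem.1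
      have hsmem : s ∈ palSet (Th θ) (prefixWord u n) := ⟨hsuf.isInfix, hpals⟩
      have hwinf : prefixWord u (n - 1) <:+: prefixWord u n :=
        ⟨[], [u (n - 1)], by rw [hsucc]; simp⟩
      have h1 : (palSet (Th θ) (prefixWord u (n - 1))).ncard + 1
          ≤ (palSet (Th θ) (prefixWord u n)).ncard := by
        have hsub : insert s (palSet (Th θ) (prefixWord u (n - 1)))
            ⊆ palSet (Th θ) (prefixWord u n) := by
          rintro x hx
          rcases Set.mem_insert_iff.mp hx with rfl | hxw
          · exact hsmem
          · exact palSet_mono _ hwinf hxw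
        have := Set.ncard_le_ncard hsub (palSet_finite _ _)
        rwa [Set.ncard_insert_of_notMem hsnotw (palSet_finite _ _)] at this
      have h2 : (palSet (Th θ) (prefixWord u n)).ncard
          ≤ (palSet (Th θ) (prefixWord u (n - 1))).ncard + 1 := by
        rw [hsucc]
        exact pal_ncard_concat_le θ _ _
      have hG : (Gset (Th θ) (prefixWord u n)).ncard
          = (Gset (Th θ) (prefixWord u (n - 1))).ncard := by
        have heq : Gset (Th θ) (prefixWord u n) = Gset (Th θ) (prefixWord u (n - 1)) := by
          apply le_antisymm
          · intro P hP
            by_contra hPn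
            rw [hsucc] at hP hsmem
            exact exclusion hθ (prefixWord u (n - 1)) (u (n - 1)) ⟨P, hP, hPn⟩
              ⟨s, hsmem, hsnotw⟩
          · exact gset_mono _ (fun x hx => by rw [hsucc]; exact List.mem_append.mpr (Or.inl hx))
        rw [heq]
      unfold defect
      rw [gammaTheta_eq, gammaTheta_eq, hG, prefixWord_length, prefixWord_length]
      have hn1 : 1 ≤ n := by omega
      omega
    have const : ∀ k, defect (Th θ) (prefixWord u (H + 1 + k))
        = defect (Th θ) (prefixWord u (H + 1)) := by
      intro k
      induction k with
      | zero => rfl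
      | succ k ih =>
        have hstep := step (H + 1 + (k + 1)) (by omega)
        rw [show H + 1 + (k + 1) - 1 = H + 1 + k by omega] at hstep
        rw [hstep, ih]
    have hbound : ∀ n, defect (Th θ) (prefixWord u n) ≤ defect (Th θ) (prefixWord u (H + 1)) := by
      intro n
      rcases le_or_gt n (H + 1) with h | h
      · exact defect_prefix_mono hθ (prefixWord_prefix u h)
      · have := const (n - (H + 1))
        rw [show H + 1 + (n - (H + 1)) = n by omega] at this
        exact le_of_eq this
    refine ⟨defect (Th θ) (prefixWord u (H + 1)), ?_⟩
    rintro v ⟨i, hocc⟩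
    have hv : v <:+ prefixWord u (i + v.length) := occursAt_suffix u hocc
    calc defect (Th θ) v ≤ defect (Th θ) (prefixWord u (i + v.length)) :=
          defect_suffix_mono hθ hv
      _ ≤ _ := hbound _
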